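/- Symmetry of the Kawai–Yoshioka coefficients underlying the motivic theory: let W = P · Q, where P = Σ_{j,j'≥0} u^{j−j'} y^{j+j'+1} (the expansion of 1/((uy−1)(u^{−1}−y^{−1})) in positive powers of y) and Q = ∏_{n≥1} [(1 − u^{−1}y^{−1}q^n)(1 − u^{−1}y q^n)(1 − q^n)^{20}(1 − u y^{−1} q^n)(1 − u y q^n)]^{−1}, regarded as an element of S[[q]] with S the ring of formal Laurent series in y over ℤ[u, u^{−1}]. Then for all integers h, d ≥ 0 (with the convention that the coefficient of q^{−1} of an element of S[[q]] is 0), the coefficient of y^{1−h+d} in the q^{h−1} coefficient of W equals the coefficient of y^{1−d+h} in the q^{d−1} coefficient of W, as elements of ℤ[u, u^{−1}]. -/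

import Mathlib

noncomputable section

/-- `S = ℤ[u,u⁻¹]((y))`, formal Laurent series in `y` over Laurent polynomials in `u`. -/
abbrev S13 : Type := LaurentSeries (LaurentPolynomial ℤ)

instance : TopologicalSpace S13 := ⊥

/-- The product (pi) topology on `S⟦q⟧`, coefficientwise. -/
instance : TopologicalSpace (PowerSeries S13) :=
  inferInstanceAs (TopologicalSpace ((Unit →₀ ℕ) → S13))

/-- `P = ∑_{j,j' ≥ 0} u^{j−j'} y^{j+j'+1} ∈ S`, the expansion of
`1/((uy−1)(u⁻¹−y⁻¹))` in positive powers of `y`, written as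
`y·(∑_j u^j y^j)·(∑_{j'} u^{−j'} y^{j'})`. -/
def Pser : S13 :=
  HahnSeries.single (1 : ℤ) 1 *
    HahnSeries.ofPowerSeries ℤ (LaurentPolynomial ℤ)
      (PowerSeries.mk fun j => LaurentPolynomial.T (j : ℤ)) *
    HahnSeries.ofPowerSeries ℤ (LaurentPolynomial ℤ)
      (PowerSeries.mk fun j => LaurentPolynomial.T (-(j : ℤ)))

/-- `Q = ∏_{n ≥ 1} [(1 − u⁻¹y⁻¹q^n)(1 − u⁻¹y q^n)(1 − q^n)^20(1 − u y⁻¹ q^n)(1 − u y q^n)]⁻¹`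
in `S⟦q⟧`. -/
def Qser : PowerSeries S13 :=
  ∏' n : ℕ, Ring.inverse
    ((1 - PowerSeries.C (R := S13) (HahnSeries.single (-1 : ℤ) (LaurentPolynomial.T (-1))) *
        PowerSeries.X ^ (n + 1)) *
     (1 - PowerSeries.C (R := S13) (HahnSeries.single (1 : ℤ) (LaurentPolynomial.T (-1))) *
        PowerSeries.X ^ (n + 1)) *
     (1 - (PowerSeries.X : PowerSeries S13) ^ (n + 1)) ^ 20 *
     (1 - PowerSeries.C (R := S13) (HahnSeries.single (-1 : ℤ) (LaurentPolynomial.T 1)) *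
        PowerSeries.X ^ (n + 1)) *
     (1 - PowerSeries.C (R := S13) (HahnSeries.single (1 : ℤ) (LaurentPolynomial.T 1)) *
        PowerSeries.X ^ (n + 1)))

/-- `W = P·Q ∈ S⟦q⟧`, the Kawai–Yoshioka generating series. -/
def Wser : PowerSeries S13 := PowerSeries.C (R := S13) Pser * Qser

/-- The `q^m` coefficient of `W`, with the convention that the `q^{−1}` coefficient
(and every negative coefficient) is `0`. -/
def cfW (m : ℤ) : S13 := if 0 ≤ m then PowerSeries.coeff (R := S13) m.toNat Wser else 0

/-!
Write `q` for `X` and `y` for the variable of `S13`, so that `HahnSeries.single m c` is `c yᵐ`.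
The substitution `τ = swapYQY : y ↦ q / y`, i.e. `yᵐ qᵃ ↦ y⁻ᵐ qᵃ⁺ᵐ`, makes sense on power series
in `y` and `q / y` (those whose `qᵃ`-coefficient has `y`-order at least `-a`), and the theorem is
the coefficientwise form of `τ W = q y⁻² W`.

Now `W = y / D` with
`D = (1 - u y)(1 - u⁻¹ y) ∏ₙ≥₁ (1 - u⁻¹ y⁻¹ qⁿ)(1 - u⁻¹ y qⁿ)(1 - qⁿ)²⁰(1 - u y⁻¹ qⁿ)(1 - u y qⁿ)`.
As `τ y = q y⁻¹`, `τ (1 - c y qⁿ) = 1 - c y⁻¹ qⁿ⁺¹` and `τ (1 - qⁿ) = 1 - qⁿ`, the substitution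
permutes the factors of `D`. Since `τ` is not continuous for the `q`-adic topology, we work with
the truncation `D_M = truncDenom M` of `D` at `q^M`: `τ` permutes its factors up to two factors at
each end, which are `≡ 1 mod q^M`, and `W D_M ≡ y mod q^(M+1)`. Reading off the coefficient of
`qᴺ yᵐ` with `M ≥ N + m` gives `τ W · D_M ≡ q y⁻² W · D_M mod q^M`, and `D_M` is a unit.
-/

namespace KawaiYoshioka

open PowerSeries Finset Filter Topology

def coeffZ {A : Type*} [Semiring A] (f : A⟦X⟧) (a : ℤ) : A := if 0 ≤ a then coeff a.toNat f else 0

@[simp]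
theorem coeffZ_natCast {A : Type*} [Semiring A] (f : A⟦X⟧) (n : ℕ) : coeffZ f n = coeff n f := by
  simp [coeffZ]

theorem coeffZ_of_neg {A : Type*} [Semiring A] (f : A⟦X⟧) {a : ℤ} (ha : a < 0) : coeffZ f a = 0 :=
  if_neg (by omega)

theorem coeffZ_one {A : Type*} [Semiring A] (a : ℤ) :
    coeffZ (1 : A⟦X⟧) a = if a = 0 then 1 else 0 := by
  unfold coeffZ
  split_ifs with h₁ h₂ h₂
  · simp [h₂]
  · rw [coeff_one, if_neg (by omega)]
  · omega
  · rfl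

theorem coeffZ_sub {A : Type*} [Ring A] (f g : A⟦X⟧) (a : ℤ) :
    coeffZ (f - g) a = coeffZ f a - coeffZ g a := by
  unfold coeffZ; split_ifs <;> simp

theorem coeffZ_C_mul_X_pow_mul {A : Type*} [Semiring A] (s : A) (k : ℕ) (f : A⟦X⟧) (a : ℤ) :
    coeffZ (C s * X ^ k * f) a = s * coeffZ f (a - k) := by
  unfold coeffZ
  rw [mul_assoc]
  split_ifs with h₁ h₂ h₂
  · rw [coeff_C_mul, coeff_X_pow_mul', if_pos (by omega)]
    congr 3; omega
  · rw [coeff_C_mul, coeff_X_pow_mul', if_neg (by omega), mul_zero]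
  · omega
  · rw [mul_zero]

section Congruence

variable {A : Type*} [CommRing A]

theorem smodEq_X_pow_iff {n : ℕ} {f g : A⟦X⟧} :
    f ≡ g [SMOD Ideal.span {(X : A⟦X⟧) ^ n}] ↔ ∀ i < n, coeff i f = coeff i g := by
  simp only [SModEq.sub_mem, Ideal.mem_span_singleton, X_pow_dvd_iff, map_sub, sub_eq_zero]

theorem one_sub_C_mul_X_pow_smodEq_one {n k : ℕ} (hnk : n ≤ k) (c : A) :
    1 - C c * X ^ k ≡ 1 [SMOD Ideal.span {(X : A⟦X⟧) ^ n}] := by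
  rw [SModEq.sub_mem, sub_sub_cancel_left, neg_mem_iff, Ideal.mem_span_singleton]
  exact (pow_dvd_pow X hnk).mul_left _

theorem smodEq_one_of_mul_eq_one {I : Ideal A} {f g : A} (hfg : f * g = 1)
    (hf : f ≡ 1 [SMOD I]) : g ≡ 1 [SMOD I] := by
  have := (SModEq.refl g).mul hf
  rwa [mul_comm, hfg, mul_one, SModEq.comm] at this

theorem prod_smodEq_prod_range {f : ℕ → A⟦X⟧}
    (hf : ∀ n, f n ≡ 1 [SMOD Ideal.span {(X : A⟦X⟧) ^ (n + 1)}]) {M : ℕ} {s : Finset ℕ}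
    (hs : range M ⊆ s) :
    ∏ n ∈ s, f n ≡ ∏ n ∈ range M, f n [SMOD Ideal.span {(X : A⟦X⟧) ^ (M + 1)}] := by
  rw [← prod_sdiff hs]
  conv_rhs => rw [← one_mul (∏ n ∈ range M, f n)]
  refine SModEq.mul ?_ SModEq.rfl
  simpa using SModEq.prod fun n hn => (hf n).mono (Ideal.span_singleton_le_span_singleton.2
    (pow_dvd_pow X (by simp at hn; omega)))

open WithPiTopology in
theorem tprod_smodEq_prod_range [TopologicalSpace A] [DiscreteTopology A] {f : ℕ → A⟦X⟧}
    (hf : ∀ n, f n ≡ 1 [SMOD Ideal.span {(X : A⟦X⟧) ^ (n + 1)}]) (M : ℕ) :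
    ∏' n, f n ≡ ∏ n ∈ range M, f n [SMOD Ideal.span {(X : A⟦X⟧) ^ (M + 1)}] := by
  have horder : Tendsto (fun n => (f n - 1).order) atTop (𝓝 ⊤) := by
    refine ENat.tendsto_nhds_top_iff_natCast_lt.2 fun n => eventually_atTop.2 ⟨n, fun i hi => ?_⟩
    refine lt_of_lt_of_le (by exact_mod_cast Nat.lt_succ_of_le hi) (nat_le_order _ _ fun j hj => ?_)
    simpa [sub_eq_zero] using smodEq_X_pow_iff.1 (hf i) j hj
  have hmult : Multipliable f := by
    simpa using multipliable_one_add_of_tendsto_order_atTop_nhds_top _ horder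
  refine smodEq_X_pow_iff.2 fun i hi => tendsto_nhds_unique
    (((continuous_coeff A i).tendsto _).comp hmult.hasProd) (tendsto_const_nhds.congr' ?_)
  exact eventually_atTop.2 ⟨range M, fun s hs =>
    (smodEq_X_pow_iff.1 (prod_smodEq_prod_range hf hs) i hi).symm⟩

end Congruence

section Subring

variable (R : Type*) [CommRing R]

/-- Power series in `y` and `q / y`: the `qᵃ`-coefficient has `y`-order at least `-a`. -/
def yqySubring : Subring (LaurentSeries R)⟦X⟧ where
  carrier := {f | ∀ a : ℕ, ((-a : ℤ) : WithTop ℤ) ≤ (coeff a f).orderTop}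
  zero_mem' a := by simp
  one_mem' a := by
    rw [coeff_one]
    split_ifs with ha
    · subst ha
      exact le_trans (by simp) (HahnSeries.orderTop_single_le (a := (0 : ℤ)) (r := (1 : R)))
    · simp
  add_mem' {f g} hf hg a := by
    rw [map_add]
    exact le_trans (le_min (hf a) (hg a)) HahnSeries.min_orderTop_le_orderTop_add
  neg_mem' {f} hf a := by rw [map_neg, HahnSeries.orderTop_neg]; exact hf a
  mul_mem' {f g} hf hg a := by
    rw [coeff_mul]
    refine sum_induction _ (fun x : LaurentSeries R => ((-a : ℤ) : WithTop ℤ) ≤ x.orderTop)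
      (fun x y hx hy => le_trans (le_min hx hy) HahnSeries.min_orderTop_le_orderTop_add)
      (by simp) fun p hp => le_trans ?_ HahnSeries.orderTop_add_le_mul
    rw [HasAntidiagonal.mem_antidiagonal] at hp
    calc ((-a : ℤ) : WithTop ℤ) = ((-p.1 : ℤ) : WithTop ℤ) + ((-p.2 : ℤ) : WithTop ℤ) := by
          rw [← WithTop.coe_add]; congr 1; omega
      _ ≤ _ := add_le_add (hf p.1) (hg p.2)

variable {R}

theorem coeff_coeffZ_eq_zero {f : (LaurentSeries R)⟦X⟧} (hf : f ∈ yqySubring R) {a m : ℤ}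
    (h : a + m < 0) : (coeffZ f a).coeff m = 0 := by
  rcases lt_or_ge a 0 with ha | ha
  · rw [coeffZ_of_neg f ha, HahnSeries.coeff_zero]
  · lift a to ℕ using ha
    rw [coeffZ_natCast]
    exact HahnSeries.coeff_eq_zero_of_lt_orderTop
      (lt_of_lt_of_le (by exact_mod_cast (by omega : m < -(a : ℤ))) (hf a))

theorem C_mem_yqySubring {s : LaurentSeries R} (hs : 0 ≤ s.orderTop) : C s ∈ yqySubring R := by
  intro a
  rw [coeff_C]
  split_ifs with ha
  · subst ha; simpa using hs
  · simp

theorem C_single_mul_X_pow_mem_yqySubring {ε : ℤ} {k : ℕ} (h : 0 ≤ (k : ℤ) + ε) (c : R) :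
    C (HahnSeries.single ε c) * X ^ k ∈ yqySubring R := by
  intro a
  rw [coeff_C_mul_X_pow]
  split_ifs with ha
  · subst ha
    exact le_trans (by exact_mod_cast (by omega : -(a : ℤ) ≤ ε)) HahnSeries.orderTop_single_le
  · simp

theorem mem_yqySubring_of_forall_smodEq {g : (LaurentSeries R)⟦X⟧}
    (h : ∀ a : ℕ, ∃ g' ∈ yqySubring R,
      g ≡ g' [SMOD Ideal.span {(X : (LaurentSeries R)⟦X⟧) ^ (a + 1)}]) :
    g ∈ yqySubring R := by
  intro a
  obtain ⟨g', hg', hgg'⟩ := h a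
  rw [smodEq_X_pow_iff.1 hgg' a a.lt_succ_self]
  exact hg' a

theorem mem_yqySubring_of_mul_eq_one {f g : (LaurentSeries R)⟦X⟧} (hf : f ∈ yqySubring R)
    (hf₀ : constantCoeff f = 1) (hfg : f * g = 1) : g ∈ yqySubring R := by
  refine mem_yqySubring_of_forall_smodEq fun a => ⟨∑ j ∈ range (a + 1), (1 - f) ^ j,
    sum_mem fun j _ => pow_mem (sub_mem (one_mem _) hf) j, ?_⟩
  have hX : X ∣ 1 - f := X_dvd_iff.2 (by simp [hf₀])
  -- truncating the geometric series `g = ∑ (1 - f)ʲ` leaves a multiple of `(1 - f)^(a + 1)`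
  have hgeom : g - ∑ j ∈ range (a + 1), (1 - f) ^ j = (1 - f) ^ (a + 1) * g := by
    calc g - ∑ j ∈ range (a + 1), (1 - f) ^ j
        = g - (∑ j ∈ range (a + 1), (1 - f) ^ j) * (1 - (1 - f)) * g := by
          rw [sub_sub_cancel, mul_assoc, hfg, mul_one]
      _ = (1 - f) ^ (a + 1) * g := by rw [geom_sum_mul_neg]; ring
  rw [SModEq.sub_mem, Ideal.mem_span_singleton, hgeom]
  exact (pow_dvd_pow_of_dvd hX _).mul_right _

end Subring

section Swap

variable {R : Type*} [CommRing R] {f g : (LaurentSeries R)⟦X⟧}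

/-- The substitution `y ↦ q / y`, i.e. `yᵐ qᵃ ↦ y⁻ᵐ qᵃ⁺ᵐ`. -/
def swapYQY (f : (LaurentSeries R)⟦X⟧) : (LaurentSeries R)⟦X⟧ :=
  mk fun N => HahnSeries.ofSuppBddBelow (fun m => (coeffZ f (N + m)).coeff (-m))
    ⟨-N, fun m hm => by
      by_contra h
      exact hm (show (coeffZ f (N + m)).coeff (-m) = 0 by
        rw [coeffZ_of_neg f (by omega), HahnSeries.coeff_zero])⟩

@[simp]
theorem coeff_coeff_swapYQY (f : (LaurentSeries R)⟦X⟧) (N : ℕ) (m : ℤ) :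
    (coeff N (swapYQY f)).coeff m = (coeffZ f (N + m)).coeff (-m) := by
  rw [swapYQY, coeff_mk]
  rfl

theorem coeff_coeffZ_swapYQY (hf : f ∈ yqySubring R) (a m : ℤ) :
    (coeffZ (swapYQY f) a).coeff m = (coeffZ f (a + m)).coeff (-m) := by
  rcases lt_or_ge a 0 with ha | ha
  · rw [coeffZ_of_neg _ ha, HahnSeries.coeff_zero, coeff_coeffZ_eq_zero hf (by omega)]
  · lift a to ℕ using ha
    rw [coeffZ_natCast, coeff_coeff_swapYQY]

theorem swapYQY_sub (f g : (LaurentSeries R)⟦X⟧) : swapYQY (f - g) = swapYQY f - swapYQY g := by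
  ext N m
  simp [coeffZ_sub]

theorem swapYQY_one : swapYQY (1 : (LaurentSeries R)⟦X⟧) = 1 := by
  ext N m
  rw [coeff_coeff_swapYQY, coeff_one, coeffZ_one]
  split_ifs with h₁ h₂ h₂
  · obtain rfl : m = 0 := by omega
    simp
  · rw [HahnSeries.coeff_one, if_neg (by omega), HahnSeries.coeff_zero]
  · rw [HahnSeries.coeff_zero, HahnSeries.coeff_one, if_neg (by omega)]
  · rfl

theorem swapYQY_C_single_mul_X_pow_mul (hf : f ∈ yqySubring R) {ε : ℤ} {k k' : ℕ}
    (hk : (k' : ℤ) = k + ε) (c : R) :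
    swapYQY (C (HahnSeries.single ε c) * X ^ k * f) =
      C (HahnSeries.single (-ε) c) * X ^ k' * swapYQY f := by
  ext N m
  rw [coeff_coeff_swapYQY, ← coeffZ_natCast, coeffZ_C_mul_X_pow_mul, coeffZ_C_mul_X_pow_mul,
    HahnSeries.coeff_single_mul, HahnSeries.coeff_single_mul, coeff_coeffZ_swapYQY hf]
  congr 3 <;> omega

theorem coeff_swapYQY_eq_of_smodEq {M N : ℕ} {m : ℤ}
    (h : f ≡ g [SMOD Ideal.span {(X : (LaurentSeries R)⟦X⟧) ^ (M + 1)}]) (hNm : N + m ≤ M) :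
    (coeff N (swapYQY f)).coeff m = (coeff N (swapYQY g)).coeff m := by
  rw [coeff_coeff_swapYQY, coeff_coeff_swapYQY]
  rcases lt_or_ge ((N : ℤ) + m) 0 with hneg | hnonneg
  · rw [coeffZ_of_neg f hneg, coeffZ_of_neg g hneg]
  · unfold coeffZ
    rw [if_pos hnonneg, if_pos hnonneg, smodEq_X_pow_iff.1 h _ (by omega)]

def oneSubMonomial (ε : ℤ) (c : R) (k : ℕ) : (LaurentSeries R)⟦X⟧ :=
  1 - C (HahnSeries.single ε c) * X ^ k

theorem oneSubMonomial_zero (ε : ℤ) (c : R) :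
    oneSubMonomial ε c 0 = C (1 - HahnSeries.single ε c) := by
  simp [oneSubMonomial]

theorem oneSubMonomial_mem_yqySubring {ε : ℤ} {k : ℕ} (h : 0 ≤ (k : ℤ) + ε) (c : R) :
    oneSubMonomial ε c k ∈ yqySubring R :=
  sub_mem (one_mem _) (C_single_mul_X_pow_mem_yqySubring h c)

theorem oneSubMonomial_smodEq_one {n k : ℕ} (hnk : n ≤ k) (ε : ℤ) (c : R) :
    oneSubMonomial ε c k ≡ 1 [SMOD Ideal.span {(X : (LaurentSeries R)⟦X⟧) ^ n}] :=
  one_sub_C_mul_X_pow_smodEq_one hnk _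

theorem swapYQY_mul_oneSubMonomial (hf : f ∈ yqySubring R) {ε : ℤ} {k k' : ℕ}
    (hk : (k' : ℤ) = k + ε) (c : R) :
    swapYQY (f * oneSubMonomial ε c k) = swapYQY f * oneSubMonomial (-ε) c k' := by
  rw [oneSubMonomial, oneSubMonomial, mul_sub, mul_one, mul_comm f, swapYQY_sub,
    swapYQY_C_single_mul_X_pow_mul hf hk]
  ring

theorem swapYQY_mul_prod (hf : f ∈ yqySubring R) {ι : Type*} (s : Finset ι) (ε : ι → ℤ)
    (c : ι → R) (k k' : ι → ℕ) (hk : ∀ i ∈ s, (k' i : ℤ) = k i + ε i) :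
    swapYQY (f * ∏ i ∈ s, oneSubMonomial (ε i) (c i) (k i)) =
      swapYQY f * ∏ i ∈ s, oneSubMonomial (-ε i) (c i) (k' i) := by
  classical
  induction s using Finset.induction_on with
  | empty => simp
  | insert i s hi ih =>
    have hmem : f * ∏ j ∈ s, oneSubMonomial (ε j) (c j) (k j) ∈ yqySubring R :=
      mul_mem hf (prod_mem fun j hj => oneSubMonomial_mem_yqySubring
        (by have := hk j (mem_insert_of_mem hj); omega) _)
    rw [prod_insert hi, prod_insert hi, mul_left_comm, mul_comm,
      swapYQY_mul_oneSubMonomial hmem (hk i (mem_insert_self i s)),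
      ih fun j hj => hk j (mem_insert_of_mem hj)]
    ring

theorem swapYQY_C_single_one :
    swapYQY (C (HahnSeries.single 1 (1 : R))) = C (HahnSeries.single (-1) 1) * X := by
  simpa [swapYQY_one] using
    swapYQY_C_single_mul_X_pow_mul (one_mem (yqySubring R)) (ε := 1) (k := 0) (k' := 1) rfl 1

def thetaBlock (c : R) (M : ℕ) : (LaurentSeries R)⟦X⟧ :=
  (∏ n ∈ range (M + 1), oneSubMonomial 1 c n) * ∏ n ∈ range M, oneSubMonomial (-1) c (n + 1)

theorem thetaBlock_mem_yqySubring (c : R) (M : ℕ) : thetaBlock c M ∈ yqySubring R :=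
  mul_mem (prod_mem fun _ _ => oneSubMonomial_mem_yqySubring (by omega) c)
    (prod_mem fun _ _ => oneSubMonomial_mem_yqySubring (by omega) c)

theorem swapYQY_mul_thetaBlock (hf : f ∈ yqySubring R) (c : R) (M : ℕ) :
    swapYQY (f * thetaBlock c M) * oneSubMonomial 1 c M =
      swapYQY f * thetaBlock c M * oneSubMonomial (-1) c (M + 1) := by
  rw [thetaBlock, ← mul_assoc,
    swapYQY_mul_prod (mul_mem hf (prod_mem fun _ _ => oneSubMonomial_mem_yqySubring (by omega) c))
      (range M) (fun _ => -1) (fun _ => c) (fun n => n + 1) (fun n => n) (fun _ _ => by omega),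
    swapYQY_mul_prod hf (range (M + 1)) (fun _ => 1) (fun _ => c) (fun n => n) (fun n => n + 1)
      (fun _ _ => by omega)]
  simp only [neg_neg, prod_range_succ]
  ring

def etaBlock (M : ℕ) : (LaurentSeries R)⟦X⟧ := ∏ n ∈ range M, oneSubMonomial 0 1 (n + 1)

theorem etaBlock_mem_yqySubring (M : ℕ) : etaBlock M ∈ yqySubring R :=
  prod_mem fun _ _ => oneSubMonomial_mem_yqySubring (by omega) 1

theorem swapYQY_mul_etaBlock_pow (hf : f ∈ yqySubring R) (M j : ℕ) :
    swapYQY (f * etaBlock M ^ j) = swapYQY f * etaBlock M ^ j := by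
  have hprod : etaBlock M ^ j =
      ∏ p ∈ range M ×ˢ range j, oneSubMonomial (R := R) 0 1 (p.1 + 1) := by
    simp [etaBlock, prod_product, prod_pow]
  simpa [hprod] using swapYQY_mul_prod hf (range M ×ˢ range j) (fun _ => 0) (fun _ => 1)
    (fun p => p.1 + 1) (fun p => p.1 + 1) (fun _ _ => by omega)

end Swap

theorem eq_of_coeff_mul_eq {R : Type*} [CommRing R] {f g : (LaurentSeries R)⟦X⟧}
    {D : ℕ → (LaurentSeries R)⟦X⟧} (hD : ∀ M, IsUnit (D M))
    (hstab : ∀ M M', M ≤ M' → D M' ≡ D M [SMOD Ideal.span {(X : (LaurentSeries R)⟦X⟧) ^ (M + 1)}])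
    (h : ∀ (N M : ℕ) (m : ℤ), N < M → N + m ≤ M →
      (coeff N (f * D M)).coeff m = (coeff N (g * D M)).coeff m) :
    f = g := by
  have hdvd : ∀ M, X ^ M ∣ f - g := fun M => by
    rw [← (hD M).dvd_mul_right, X_pow_dvd_iff]
    intro N hN
    ext m
    -- enlarge `M` so that the coefficient of `yᵐ` is covered by `h`
    set M' := max M (N + m).toNat
    have hM' : M ≤ M' := le_max_left _ _
    have hf := smodEq_X_pow_iff.1 ((SModEq.refl f).mul (hstab M M' hM')) N (by omega)
    have hg := smodEq_X_pow_iff.1 ((SModEq.refl g).mul (hstab M M' hM')) N (by omega)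
    rw [sub_mul, map_sub, HahnSeries.coeff_sub, ← hf, ← hg, h N M' m (by omega) (by omega),
      sub_self, HahnSeries.coeff_zero]
  ext N : 1
  simpa [sub_eq_zero] using X_pow_dvd_iff.1 (hdvd (N + 1)) N N.lt_succ_self

theorem ofPowerSeries_rescale_mk_one_mul {R : Type*} [CommRing R] (c : R) :
    HahnSeries.ofPowerSeries ℤ R (rescale c (mk 1)) * (1 - HahnSeries.single 1 c) = 1 := by
  have h : HahnSeries.ofPowerSeries ℤ R (rescale c (1 - X)) = 1 - HahnSeries.single 1 c := by
    simp [rescale_X, HahnSeries.C_apply, HahnSeries.single_mul_single]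
  rw [← h, ← map_mul, ← map_mul, mk_one_mul_one_sub_eq_one, map_one, map_one]

theorem zero_le_orderTop_ofPowerSeries {R : Type*} [CommRing R] (x : R⟦X⟧) :
    0 ≤ (HahnSeries.ofPowerSeries ℤ R x).orderTop :=
  HahnSeries.le_orderTop_iff_forall.2 fun j hj => by
    rw [coeff_coe, if_pos (by exact_mod_cast hj)]

section GeneratingSeries

open LaurentPolynomial (T T_pow)

instance : DiscreteTopology S13 := ⟨rfl⟩

def qFactor (n : ℕ) : PowerSeries S13 :=
  oneSubMonomial (-1) (T (-1)) (n + 1) * oneSubMonomial 1 (T (-1)) (n + 1) *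
    oneSubMonomial 0 1 (n + 1) ^ 20 * oneSubMonomial (-1) (T 1) (n + 1) *
    oneSubMonomial 1 (T 1) (n + 1)

theorem Qser_eq_tprod : Qser = ∏' n, Ring.inverse (qFactor n) := by
  simp [Qser, qFactor, oneSubMonomial]

theorem constantCoeff_qFactor (n : ℕ) : constantCoeff (qFactor n) = 1 := by
  simp [qFactor, oneSubMonomial]

theorem isUnit_qFactor (n : ℕ) : IsUnit (qFactor n) :=
  isUnit_iff_constantCoeff.2 (by simp [constantCoeff_qFactor])

theorem qFactor_mem_yqySubring (n : ℕ) : qFactor n ∈ yqySubring _ := by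
  have h : ∀ {ε : ℤ} (c : LaurentPolynomial ℤ), -1 ≤ ε →
      oneSubMonomial ε c (n + 1) ∈ yqySubring _ :=
    fun c hε => oneSubMonomial_mem_yqySubring (by omega) c
  exact mul_mem (mul_mem (mul_mem (mul_mem (h _ le_rfl) (h _ (by norm_num)))
    (pow_mem (h _ (by norm_num)) 20)) (h _ le_rfl)) (h _ (by norm_num))

theorem qFactor_smodEq_one (n : ℕ) :
    qFactor n ≡ 1 [SMOD Ideal.span {(X : PowerSeries S13) ^ (n + 1)}] := by
  have h := fun ε c => oneSubMonomial_smodEq_one (R := LaurentPolynomial ℤ) le_rfl ε c (k := n + 1)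
  unfold qFactor
  simpa using ((((h _ _).mul (h _ _)).mul ((h 0 1).pow 20)).mul (h _ _)).mul (h _ _)

theorem Qser_smodEq_prod_range (M : ℕ) :
    Qser ≡ ∏ n ∈ range M, Ring.inverse (qFactor n)
      [SMOD Ideal.span {(X : PowerSeries S13) ^ (M + 1)}] := by
  have hinv : ∀ n, Ring.inverse (qFactor n) ≡ 1
      [SMOD Ideal.span {(X : PowerSeries S13) ^ (n + 1)}] := fun n =>
    smodEq_one_of_mul_eq_one (Ring.mul_inverse_cancel _ (isUnit_qFactor n)) (qFactor_smodEq_one n)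
  rw [Qser_eq_tprod]
  exact tprod_smodEq_prod_range hinv M

theorem Qser_mem_yqySubring : Qser ∈ yqySubring _ :=
  mem_yqySubring_of_forall_smodEq fun a => ⟨_, prod_mem fun n _ =>
    mem_yqySubring_of_mul_eq_one (qFactor_mem_yqySubring n) (constantCoeff_qFactor n)
      (Ring.mul_inverse_cancel _ (isUnit_qFactor n)), Qser_smodEq_prod_range a⟩

def yFactor : S13 := (1 - HahnSeries.single 1 (T 1)) * (1 - HahnSeries.single 1 (T (-1)))

theorem Pser_mul_yFactor : Pser * yFactor = HahnSeries.single 1 1 := by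
  have h₁ : (PowerSeries.mk fun j : ℕ => T (j : ℤ)) =
      rescale (T 1 : LaurentPolynomial ℤ) (mk 1) := by
    ext j; simp [T_pow]
  have h₂ : (PowerSeries.mk fun j : ℕ => T (-(j : ℤ))) =
      rescale (T (-1) : LaurentPolynomial ℤ) (mk 1) := by
    ext j; simp [T_pow]
  rw [Pser, yFactor, h₁, h₂]
  calc _ = HahnSeries.single (1 : ℤ) (1 : LaurentPolynomial ℤ) *
        (HahnSeries.ofPowerSeries ℤ _ (rescale (T 1) (mk 1)) * (1 - HahnSeries.single 1 (T 1))) *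
        (HahnSeries.ofPowerSeries ℤ _ (rescale (T (-1)) (mk 1)) *
          (1 - HahnSeries.single 1 (T (-1)))) := by ring
    _ = _ := by rw [ofPowerSeries_rescale_mk_one_mul, ofPowerSeries_rescale_mk_one_mul, mul_one,
      mul_one]

theorem Wser_mem_yqySubring : Wser ∈ yqySubring _ := by
  have hP : 0 ≤ Pser.orderTop := by
    refine le_trans ?_ (le_trans (add_le_add_left HahnSeries.orderTop_add_le_mul _)
      HahnSeries.orderTop_add_le_mul)
    exact add_nonneg (add_nonneg (le_trans (by norm_num) HahnSeries.orderTop_single_le)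
      (zero_le_orderTop_ofPowerSeries _)) (zero_le_orderTop_ofPowerSeries _)
  exact mul_mem (C_mem_yqySubring hP) Qser_mem_yqySubring

def truncDenom (M : ℕ) : PowerSeries S13 :=
  thetaBlock (T 1) M * thetaBlock (T (-1)) M * etaBlock M ^ 20

theorem truncDenom_eq (M : ℕ) : truncDenom M = C yFactor * ∏ n ∈ range M, qFactor n := by
  simp only [truncDenom, thetaBlock, etaBlock, qFactor, prod_range_succ', oneSubMonomial_zero,
    yFactor, map_mul, prod_mul_distrib, prod_pow]
  ring

theorem isUnit_truncDenom (M : ℕ) : IsUnit (truncDenom M) := by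
  have hy : IsUnit yFactor := isUnit_of_mul_isUnit_right (x := Pser) (by
    rw [Pser_mul_yFactor]
    exact ⟨⟨_, HahnSeries.single (-1) 1, by simp [HahnSeries.single_mul_single],
      by simp [HahnSeries.single_mul_single]⟩, rfl⟩)
  rw [truncDenom_eq]
  exact (hy.map C).mul (IsUnit.prod_iff.2 fun n _ => isUnit_qFactor n)

theorem truncDenom_smodEq {M M' : ℕ} (hMM' : M ≤ M') :
    truncDenom M' ≡ truncDenom M [SMOD Ideal.span {(X : PowerSeries S13) ^ (M + 1)}] := by
  rw [truncDenom_eq, truncDenom_eq]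
  exact SModEq.rfl.mul (prod_smodEq_prod_range qFactor_smodEq_one (range_subset_range.2 hMM'))

theorem Wser_mul_truncDenom_smodEq (M : ℕ) :
    Wser * truncDenom M ≡ C (HahnSeries.single 1 1)
      [SMOD Ideal.span {(X : PowerSeries S13) ^ (M + 1)}] :=
  calc Wser * truncDenom M = C (Pser * yFactor) * (Qser * ∏ n ∈ range M, qFactor n) := by
        rw [Wser, truncDenom_eq, map_mul]; ring
    _ ≡ C (Pser * yFactor) *
          ((∏ n ∈ range M, Ring.inverse (qFactor n)) * ∏ n ∈ range M, qFactor n)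
          [SMOD Ideal.span {(X : PowerSeries S13) ^ (M + 1)}] :=
        SModEq.rfl.mul ((Qser_smodEq_prod_range M).mul SModEq.rfl)
    _ = C (HahnSeries.single 1 1) := by
        rw [← prod_mul_distrib, prod_eq_one fun n _ => Ring.inverse_mul_cancel _ (isUnit_qFactor n),
          mul_one, Pser_mul_yFactor]

theorem swapYQY_mul_truncDenom {f : PowerSeries S13} (hf : f ∈ yqySubring _) (M : ℕ) :
    swapYQY (f * truncDenom M) * (oneSubMonomial 1 (T 1) M * oneSubMonomial 1 (T (-1)) M) =
      swapYQY f * truncDenom M *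
        (oneSubMonomial (-1) (T 1) (M + 1) * oneSubMonomial (-1) (T (-1)) (M + 1)) := by
  have h₀ : f * etaBlock M ^ 20 ∈ yqySubring _ :=
    mul_mem hf (pow_mem (etaBlock_mem_yqySubring M) 20)
  have h₁ := swapYQY_mul_thetaBlock (mul_mem h₀ (thetaBlock_mem_yqySubring (T (-1)) M)) (T 1) M
  have h₂ := swapYQY_mul_thetaBlock h₀ (T (-1)) M
  have h₃ := swapYQY_mul_etaBlock_pow hf M 20
  rw [show f * truncDenom M = f * etaBlock M ^ 20 * thetaBlock (T (-1)) M * thetaBlock (T 1) M by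
    rw [truncDenom]; ring, ← mul_assoc, h₁, truncDenom]
  linear_combination (thetaBlock (T 1) M * oneSubMonomial (-1) (T 1) (M + 1)) * h₂ +
    (thetaBlock (T 1) M * oneSubMonomial (-1) (T 1) (M + 1) * thetaBlock (T (-1)) M *
      oneSubMonomial (-1) (T (-1)) (M + 1)) * h₃

theorem coeff_swapYQY_Wser_mul_truncDenom {N M : ℕ} {m : ℤ} (hN : N < M) (hNm : N + m ≤ M) :
    (coeff N (swapYQY Wser * truncDenom M)).coeff m =
      (coeff N (C (HahnSeries.single (-2) 1) * X * Wser * truncDenom M)).coeff m := by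
  have hW := Wser_mul_truncDenom_smodEq M
  have hends : swapYQY (Wser * truncDenom M) ≡ swapYQY Wser * truncDenom M
      [SMOD Ideal.span {(X : PowerSeries S13) ^ M}] :=
    calc swapYQY (Wser * truncDenom M)
        ≡ swapYQY (Wser * truncDenom M) * (oneSubMonomial 1 (T 1) M * oneSubMonomial 1 (T (-1)) M)
          [SMOD Ideal.span {(X : PowerSeries S13) ^ M}] := by
          simpa using SModEq.rfl.mul ((oneSubMonomial_smodEq_one le_rfl 1 (T 1)).mul
            (oneSubMonomial_smodEq_one le_rfl 1 (T (-1)))).symm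
      _ = swapYQY Wser * truncDenom M *
          (oneSubMonomial (-1) (T 1) (M + 1) * oneSubMonomial (-1) (T (-1)) (M + 1)) :=
          swapYQY_mul_truncDenom Wser_mem_yqySubring M
      _ ≡ swapYQY Wser * truncDenom M [SMOD Ideal.span {(X : PowerSeries S13) ^ M}] := by
          simpa using SModEq.rfl.mul ((oneSubMonomial_smodEq_one M.le_succ (-1) (T 1)).mul
            (oneSubMonomial_smodEq_one M.le_succ (-1) (T (-1))))
  have hy : C (HahnSeries.single (-2) 1) * X * C (HahnSeries.single 1 1) ≡
      C (HahnSeries.single (-2) 1) * X * (Wser * truncDenom M)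
      [SMOD Ideal.span {(X : PowerSeries S13) ^ (M + 1)}] :=
    (SModEq.refl (C (HahnSeries.single (-2) 1) * X)).mul hW.symm
  calc (coeff N (swapYQY Wser * truncDenom M)).coeff m
      = (coeff N (swapYQY (Wser * truncDenom M))).coeff m := by
        rw [smodEq_X_pow_iff.1 hends N hN]
    _ = (coeff N (swapYQY (C (HahnSeries.single 1 1) : PowerSeries S13))).coeff m :=
        coeff_swapYQY_eq_of_smodEq hW hNm
    _ = (coeff N (C (HahnSeries.single (-2) 1) * X * C (HahnSeries.single 1 1) :
          PowerSeries S13)).coeff m := by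
        rw [swapYQY_C_single_one, mul_right_comm, ← map_mul, HahnSeries.single_mul_single,
          mul_one, show (-2 : ℤ) + 1 = -1 by norm_num]
    _ = (coeff N (C (HahnSeries.single (-2) 1) * X * (Wser * truncDenom M))).coeff m := by
        rw [smodEq_X_pow_iff.1 hy N (by omega)]
    _ = _ := by rw [mul_assoc _ Wser]

theorem swapYQY_Wser : swapYQY Wser = C (HahnSeries.single (-2) 1) * X * Wser :=
  eq_of_coeff_mul_eq isUnit_truncDenom (fun _ _ h => truncDenom_smodEq h)
    fun _ _ _ hN hNm => coeff_swapYQY_Wser_mul_truncDenom hN hNm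

theorem coeff_coeffZ_Wser (a m : ℤ) :
    (coeffZ Wser a).coeff m = (coeffZ Wser (a + m - 1)).coeff (2 - m) := by
  have key := congrArg (fun f => (coeffZ f (a + m)).coeff (-m)) swapYQY_Wser
  rw [← pow_one (X : PowerSeries S13)] at key
  simpa only [coeff_coeffZ_swapYQY Wser_mem_yqySubring, coeffZ_C_mul_X_pow_mul,
    HahnSeries.coeff_single_mul, one_mul, add_neg_cancel_right, neg_neg, Nat.cast_one,
    sub_neg_eq_add, neg_add_eq_sub] using key

theorem cfW_eq_coeffZ (a : ℤ) : cfW a = coeffZ Wser a := rfl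

end GeneratingSeries

end KawaiYoshioka

/-- Symmetry of the Kawai–Yoshioka coefficients: for all `h, d ≥ 0`, the coefficient of
`y^{1−h+d}` in the `q^{h−1}` coefficient of `W` equals the coefficient of `y^{1−d+h}` in
the `q^{d−1}` coefficient of `W`, as Laurent polynomials in `u`. -/
theorem KY_coefficient_symmetry (h d : ℕ) :
    (cfW ((h : ℤ) - 1)).coeff (1 - (h : ℤ) + (d : ℤ)) =
    (cfW ((d : ℤ) - 1)).coeff (1 - (d : ℤ) + (h : ℤ)) := by
  rw [KawaiYoshioka.cfW_eq_coeffZ, KawaiYoshioka.cfW_eq_coeffZ, KawaiYoshioka.coeff_coeffZ_Wser]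
  congr 2 <;> ring

end
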